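/- arXiv:1811.04335 — 2 statements merged into one kernel-verified Lean document; each statement's English description precedes it below -/
import Mathlib

section
/- If λ = iω with ω > 0 is a root of λ² + A λ + Bλe^{-λτ} + C + De^{-λτ} = 0 (A, B, C, D, τ real), then ω² satisfies (ω²)² + (A² - 2C - B²)ω² + (C² - D²) = 0. -/
/-! Split the equation as P(iω) + Q(iω)·e^{-iωτ} = 0 with P(iω) = (C - ω²) + iAω and
Q(iω) = D + iBω. Since |e^{-iωτ}| = 1, |P(iω)|² = |Q(iω)|², which expands to the quartic. -/

open Complex

theorem normSq_eq_of_add_mul_eq_zero {P Q u : ℂ} (hu : normSq u = 1) (h : P + Q * u = 0) :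
    normSq P = normSq Q := by
  rw [eq_neg_of_add_eq_zero_left h, normSq_neg, normSq_mul, hu, mul_one]

theorem normSq_exp_neg_I_mul_ofReal_mul_ofReal (ω τ : ℝ) :
    normSq (exp (-(I * ω) * τ)) = 1 := by
  have harg : -(I * ω) * τ = ((-(ω * τ) : ℝ) : ℂ) * I := by push_cast; ring
  rw [harg, normSq_eq_norm_sq, norm_exp_ofReal_mul_I, one_pow]

theorem imaginary_root_gives_quartic_general (A B C D τ ω : ℝ)
    (h : (Complex.I * ω) ^ 2 + (A : ℂ) * (Complex.I * ω)
        + (B : ℂ) * (Complex.I * ω) * Complex.exp (-(Complex.I * ω) * τ)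
        + (C : ℂ) + (D : ℂ) * Complex.exp (-(Complex.I * ω) * τ) = 0) :
    (ω ^ 2) ^ 2 + (A ^ 2 - 2 * C - B ^ 2) * ω ^ 2 + (C ^ 2 - D ^ 2) = 0 := by
  have hsplit : (((C - ω ^ 2 : ℝ) : ℂ) + ((A * ω : ℝ) : ℂ) * I)
      + ((D : ℂ) + ((B * ω : ℝ) : ℂ) * I) * exp (-(I * ω) * τ) = 0 := by
    push_cast
    linear_combination h - (ω : ℂ) ^ 2 * I_sq
  have hmod := normSq_eq_of_add_mul_eq_zero (normSq_exp_neg_I_mul_ofReal_mul_ofReal ω τ) hsplit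
  rw [normSq_add_mul_I, normSq_add_mul_I] at hmod
  linear_combination hmod

/-- If λ = iω (ω > 0) is a root of λ² + Aλ + Bλe^{-λτ} + C + De^{-λτ} = 0, then
ω² satisfies (ω²)² + (A² - 2C - B²)ω² + (C² - D²) = 0. -/
theorem imaginary_root_gives_quartic (A B C D τ ω : ℝ) (hω : 0 < ω)
    (h : (Complex.I * ω) ^ 2 + (A : ℂ) * (Complex.I * ω)
        + (B : ℂ) * (Complex.I * ω) * Complex.exp (-(Complex.I * ω) * τ)
        + (C : ℂ) + (D : ℂ) * Complex.exp (-(Complex.I * ω) * τ) = 0) :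
    (ω ^ 2) ^ 2 + (A ^ 2 - 2 * C - B ^ 2) * ω ^ 2 + (C ^ 2 - D ^ 2) = 0 :=
  imaginary_root_gives_quartic_general A B C D τ ω h
end

section
/- Solutions c, s of the system D c + Bω s = ω² - C, -D s + Bω c = -Aω (with D² + B²ω² ≠ 0) satisfy c² + s² = 1 if and only if (ω²)² + (A² - 2C - B²)ω² + C² - D² = 0. -/
/-! Squaring and adding the two equations gives
`(D² + B²ω²)(c² + s²) = (ω² - C)² + A²ω²` (the two-square identity), so, the factor
`D² + B²ω²` being nonzero, `c² + s² = 1` exactly when the right-hand side equals `D² + B²ω²`,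
which expands to the quartic. -/

theorem sq_add_sq_mul_sq_add_sq_of_eq {R : Type*} [CommRing R] {a b x y u v : R}
    (hu : a * x + b * y = u) (hv : -a * y + b * x = v) :
    (a ^ 2 + b ^ 2) * (x ^ 2 + y ^ 2) = u ^ 2 + v ^ 2 := by
  subst hu hv
  ring

theorem solutions_on_unit_circle_iff_quartic_general (A B C D ω : ℝ)
    (hden : D ^ 2 + B ^ 2 * ω ^ 2 ≠ 0) (c s : ℝ)
    (h1 : D * c + B * ω * s = ω ^ 2 - C)
    (h2 : -D * s + B * ω * c = -A * ω) :
    c ^ 2 + s ^ 2 = 1 ↔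
      (ω ^ 2) ^ 2 + (A ^ 2 - 2 * C - B ^ 2) * ω ^ 2 + C ^ 2 - D ^ 2 = 0 := by
  have key : (D ^ 2 + B ^ 2 * ω ^ 2) * (c ^ 2 + s ^ 2) = (ω ^ 2 - C) ^ 2 + (-A * ω) ^ 2 := by
    rw [← sq_add_sq_mul_sq_add_sq_of_eq h1 h2]
    ring
  calc c ^ 2 + s ^ 2 = 1
      ↔ (D ^ 2 + B ^ 2 * ω ^ 2) * (c ^ 2 + s ^ 2) = (D ^ 2 + B ^ 2 * ω ^ 2) * 1 :=
        (mul_right_inj' hden).symm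
    _ ↔ (ω ^ 2) ^ 2 + (A ^ 2 - 2 * C - B ^ 2) * ω ^ 2 + C ^ 2 - D ^ 2 = 0 := by
        rw [key]
        constructor <;> intro h <;> linear_combination h

/-- The solutions c, s of the linear system satisfy c² + s² = 1 iff ω² solves the
quartic (ω²)² + (A² - 2C - B²)ω² + C² - D² = 0. -/
theorem solutions_on_unit_circle_iff_quartic (A B C D ω : ℝ) (hω : 0 < ω)
    (hden : D ^ 2 + B ^ 2 * ω ^ 2 ≠ 0) (c s : ℝ)
    (h1 : D * c + B * ω * s = ω ^ 2 - C)
    (h2 : -D * s + B * ω * c = -A * ω) :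
    c ^ 2 + s ^ 2 = 1 ↔
      (ω ^ 2) ^ 2 + (A ^ 2 - 2 * C - B ^ 2) * ω ^ 2 + C ^ 2 - D ^ 2 = 0 :=
  solutions_on_unit_circle_iff_quartic_general A B C D ω hden c s h1 h2
end
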